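/- arXiv:2012.13928 — 5 statements merged into one kernel-verified Lean document; each statement's English description precedes it below -/
import Mathlib

section
/- With the notation of the two-block LMMSE setup, the error covariance satisfies the recursion: Q − V₂ G Q = (I − T₂ G₂) P₁, where V₂ = Q Gᴴ (K + G Q Gᴴ)⁻¹ is the centralized LMMSE receiver for the stacked system, P₁ = Q − Q G₁ᴴ (K₁ + G₁ Q G₁ᴴ)⁻¹ G₁ Q, and T₂ = P₁ G₂ᴴ (K₂ + G₂ P₁ G₂ᴴ)⁻¹. -/
/-!
Stack the two observation blocks. The centralized innovation covariance
`K + G Q Gᴴ` is the block matrix with corner `K₁ + G₁ Q G₁ᴴ`, and its Schur complement with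
respect to that corner is exactly the second-stage innovation covariance `K₂ + G₂ P₁ G₂ᴴ`.
Inverting the block matrix by the Schur complement formula and expanding turns the centralized
error covariance `Q - Q Gᴴ (K + G Q Gᴴ)⁻¹ G Q` into `P₁ - P₁ G₂ᴴ (K₂ + G₂ P₁ G₂ᴴ)⁻¹ G₂ P₁`.
Positive definiteness only enters to make the corner and the whole block matrix invertible;
the Schur complement is then invertible as well.
-/

open Matrix ComplexOrder

namespace Matrix

section PosDef

variable {m n R : Type*} [Fintype m] [Fintype n]
  [Ring R] [PartialOrder R] [StarRing R] [StarOrderedRing R]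

theorem PosDef.fromBlocks_zero {A : Matrix m m R} {D : Matrix n n R}
    (hA : A.PosDef) (hD : D.PosDef) : (fromBlocks A 0 0 D).PosDef := by
  refine .of_dotProduct_mulVec_pos (hA.isHermitian.fromBlocks (by simp) hD.isHermitian) ?_
  intro x hx
  obtain ⟨x₁, x₂, rfl⟩ : ∃ x₁ x₂, x = Sum.elim x₁ x₂ := ⟨_, _, (Sum.elim_comp_inl_inr x).symm⟩
  simp only [fromBlocks_mulVec, Function.star_sumElim, sumElim_dotProduct_sumElim,
    Sum.elim_comp_inl, Sum.elim_comp_inr, zero_mulVec, add_zero, zero_add]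
  obtain rfl | h₁ := eq_or_ne x₁ 0
  · have h₂ : x₂ ≠ 0 := by
      rintro rfl
      exact hx Sum.elim_zero_zero
    simpa using hD.dotProduct_mulVec_pos h₂
  · exact add_pos_of_pos_of_nonneg (hA.dotProduct_mulVec_pos h₁)
      (hD.posSemidef.dotProduct_mulVec_nonneg _)

end PosDef

section BlockUpdate

variable {m₁ m₂ n α : Type*} [Fintype n] [CommRing α]

theorem fromBlocks_add_fromRows_mul_mul_fromCols (K₁ : Matrix m₁ m₁ α) (K₂ : Matrix m₂ m₂ α)
    (C₁ : Matrix m₁ n α) (C₂ : Matrix m₂ n α) (Q : Matrix n n α)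
    (B₁ : Matrix n m₁ α) (B₂ : Matrix n m₂ α) :
    fromBlocks K₁ 0 0 K₂ + fromRows C₁ C₂ * Q * fromCols B₁ B₂ =
      fromBlocks (K₁ + C₁ * Q * B₁) (C₁ * Q * B₂) (C₂ * Q * B₁) (K₂ + C₂ * Q * B₂) := by
  rw [fromRows_mul, fromRows_mul_fromCols, fromBlocks_add, zero_add, zero_add]

variable [Fintype m₁] [Fintype m₂] [DecidableEq m₁] [DecidableEq m₂] [DecidableEq n]

theorem sub_mul_fromCols_mul_inv_mul_fromRows_mul {K₁ : Matrix m₁ m₁ α} {K₂ : Matrix m₂ m₂ α}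
    {C₁ : Matrix m₁ n α} {C₂ : Matrix m₂ n α} {Q : Matrix n n α}
    {B₁ : Matrix n m₁ α} {B₂ : Matrix n m₂ α} {P₁ : Matrix n n α}
    (h₁ : IsUnit (K₁ + C₁ * Q * B₁))
    (h : IsUnit (fromBlocks K₁ 0 0 K₂ + fromRows C₁ C₂ * Q * fromCols B₁ B₂))
    (hP₁ : P₁ = Q - Q * B₁ * (K₁ + C₁ * Q * B₁)⁻¹ * C₁ * Q) :
    Q - Q * fromCols B₁ B₂ *
        (fromBlocks K₁ 0 0 K₂ + fromRows C₁ C₂ * Q * fromCols B₁ B₂)⁻¹ * fromRows C₁ C₂ * Q =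
      (1 - P₁ * B₂ * (K₂ + C₂ * P₁ * B₂)⁻¹ * C₂) * P₁ := by
  rw [fromBlocks_add_fromRows_mul_mul_fromCols] at h ⊢
  have := h₁.invertible
  have := h.invertible
  have := invertibleOfFromBlocks₁₁Invertible
    (K₁ + C₁ * Q * B₁) (C₁ * Q * B₂) (C₂ * Q * B₁) (K₂ + C₂ * Q * B₂)
  have hschur : K₂ + C₂ * Q * B₂ - C₂ * Q * B₁ * (K₁ + C₁ * Q * B₁)⁻¹ * (C₁ * Q * B₂) =
      K₂ + C₂ * P₁ * B₂ := by
    rw [hP₁]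
    simp only [Matrix.mul_sub, Matrix.sub_mul, Matrix.mul_assoc]
    abel
  rw [← invOf_eq_nonsing_inv, invOf_fromBlocks₁₁_eq, mul_fromCols, fromCols_mul_fromBlocks,
    fromCols_mul_fromRows]
  simp only [invOf_eq_nonsing_inv]
  rw [hschur]
  generalize (K₂ + C₂ * P₁ * B₂)⁻¹ = S
  subst hP₁
  simp only [Matrix.mul_add, Matrix.add_mul, Matrix.mul_sub, Matrix.sub_mul, Matrix.mul_neg,
    Matrix.neg_mul, Matrix.one_mul, Matrix.mul_assoc]
  abel

end BlockUpdate

end Matrix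

/-- Sequential error covariance update equals centralized MMSE error covariance. -/
theorem oslp_two_block_error_covariance (K M₁ M₂ : ℕ)
    (Q : Matrix (Fin K) (Fin K) ℂ)
    (G₁ : Matrix (Fin M₁) (Fin K) ℂ) (G₂ : Matrix (Fin M₂) (Fin K) ℂ)
    (K₁ : Matrix (Fin M₁) (Fin M₁) ℂ) (K₂ : Matrix (Fin M₂) (Fin M₂) ℂ)
    (hQ : Q.PosDef) (hK₁ : K₁.PosDef) (hK₂ : K₂.PosDef)
    (V₂ : Matrix (Fin K) (Fin M₁ ⊕ Fin M₂) ℂ)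
    (hV₂ : V₂ = Q * (fromRows G₁ G₂)ᴴ *
      (fromBlocks K₁ 0 0 K₂ + fromRows G₁ G₂ * Q * (fromRows G₁ G₂)ᴴ)⁻¹)
    (P₁ : Matrix (Fin K) (Fin K) ℂ)
    (hP₁ : P₁ = Q - Q * G₁ᴴ * (K₁ + G₁ * Q * G₁ᴴ)⁻¹ * G₁ * Q)
    (T₂ : Matrix (Fin K) (Fin M₂) ℂ)
    (hT₂ : T₂ = P₁ * G₂ᴴ * (K₂ + G₂ * P₁ * G₂ᴴ)⁻¹) :
    Q - V₂ * fromRows G₁ G₂ * Q = (1 - T₂ * G₂) * P₁ := by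
  have h₁ : (K₁ + G₁ * Q * G₁ᴴ).PosDef :=
    hK₁.add_posSemidef (hQ.posSemidef.mul_mul_conjTranspose_same G₁)
  have h : (fromBlocks K₁ 0 0 K₂ + fromRows G₁ G₂ * Q * (fromRows G₁ G₂)ᴴ).PosDef :=
    (hK₁.fromBlocks_zero hK₂).add_posSemidef (hQ.posSemidef.mul_mul_conjTranspose_same _)
  rw [conjTranspose_fromRows_eq_fromCols_conjTranspose] at h hV₂
  rw [hV₂, hT₂]
  exact sub_mul_fromCols_mul_inv_mul_fromRows_mul h₁.isUnit h.isUnit hP₁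
end

section
/- Let p > 0 be a real number (signal power) and Γ ≥ 0 (SINR). If the minimum MSE e satisfies e = p − p² ĥᴴ Λ⁻¹ ĥ and Γ = p ĥᴴ (Λ − p ĥ ĥᴴ)⁻¹ ĥ, where Λ is positive definite Hermitian with Λ − p ĥ ĥᴴ positive definite, then e = p / (1 + Γ). -/
open Matrix ComplexOrder

lemma vecMulVec_mulVec' {M : ℕ} (h v : Fin M → ℂ) :
    vecMulVec h (star h) *ᵥ v = (star h ⬝ᵥ v) • h := by
  funext i
  simp [vecMulVec, mulVec, dotProduct, Finset.mul_sum, mul_assoc, mul_comm, mul_left_comm]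

/-- MSE–SINR relation `e = p / (1 + Γ)`. -/
theorem mse_sinr_relation (M : ℕ) (p Γ e : ℝ)
    (hp : 0 < p) (hΓ : 0 ≤ Γ)
    (Λ : Matrix (Fin M) (Fin M) ℂ) (h : Fin M → ℂ)
    (hΛ : Λ.PosDef)
    (hΛ' : (Λ - (p : ℂ) • vecMulVec h (star h)).PosDef)
    (he : (e : ℂ) = (p : ℂ) - (p : ℂ) ^ 2 * (star h ⬝ᵥ Λ⁻¹ *ᵥ h))
    (hΓdef : (Γ : ℂ) =
      (p : ℂ) * (star h ⬝ᵥ (Λ - (p : ℂ) • vecMulVec h (star h))⁻¹ *ᵥ h)) :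
    e = p / (1 + Γ) := by
  set B := Λ - (p : ℂ) • vecMulVec h (star h) with hB
  set a : ℂ := star h ⬝ᵥ Λ⁻¹ *ᵥ h with ha
  set b : ℂ := star h ⬝ᵥ B⁻¹ *ᵥ h with hb
  have hΛinv : IsUnit Λ.det := (Matrix.isUnit_iff_isUnit_det _).1 hΛ.isUnit
  have hBinv : IsUnit B.det := (Matrix.isUnit_iff_isUnit_det _).1 hΛ'.isUnit
  -- B *ᵥ (Λ⁻¹ *ᵥ h) = (1 - p * a) • h
  have key : B *ᵥ (Λ⁻¹ *ᵥ h) = (1 - (p : ℂ) * a) • h := by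
    rw [hB, sub_mulVec, smul_mulVec, vecMulVec_mulVec', mulVec_mulVec,
      Matrix.mul_nonsing_inv Λ hΛinv, one_mulVec, sub_smul, one_smul, smul_smul, ha]
  -- hence Λ⁻¹ *ᵥ h = (1 - p*a) • (B⁻¹ *ᵥ h)
  have key2 : Λ⁻¹ *ᵥ h = (1 - (p : ℂ) * a) • (B⁻¹ *ᵥ h) := by
    have h2 := congrArg (fun v => B⁻¹ *ᵥ v) key
    simp only [mulVec_mulVec] at h2
    rwa [← Matrix.mul_assoc, Matrix.nonsing_inv_mul B hBinv, Matrix.one_mul,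
      mulVec_smul] at h2
  have key3 : a = (1 - (p : ℂ) * a) * b := by
    conv_lhs => rw [ha, key2, dotProduct_smul, smul_eq_mul, ← hb]
  have hΓb : (Γ : ℂ) = (p : ℂ) * b := hΓdef
  have hmain : (e : ℂ) * (1 + (Γ : ℂ)) = (p : ℂ) := by
    rw [he, hΓb]
    linear_combination (-(p:ℂ)^2) * key3
  have hmainR : e * (1 + Γ) = p := by exact_mod_cast hmain
  have h1 : (0:ℝ) < 1 + Γ := by linarith
  field_simp
  linarith [hmainR]
end

section
/- Let P be positive semidefinite Hermitian, H complex, Σ positive definite Hermitian, and T = P Hᴴ (Σ + H P Hᴴ)⁻¹. Then (I − T H) P is positive semidefinite Hermitian and (I − T H) P ⪯ P in the Loewner order. -/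
open Matrix ComplexOrder

/-!
With `M = S + H P Hᴴ` and `P` Hermitian, `T H P = (H P)ᴴ M⁻¹ (H P)`, a congruence of the
positive definite `M⁻¹`; this is the decrease `P − (I − T H) P`. The updated covariance is
then the Schur complement of `M` in the block matrix
`[[M, H P], [(H P)ᴴ, P]] = [[S, 0], [0, 0]] + [H; I] P [H; I]ᴴ`, which is positive semidefinite.
-/

namespace Matrix

variable {m n 𝕜 : Type*} [Fintype m] [Fintype n]
  [Field 𝕜] [PartialOrder 𝕜] [StarRing 𝕜]

theorem PosSemidef.fromBlocks_zero [DecidableEq m] {S : Matrix m m 𝕜} (hS : S.PosSemidef) :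
    (fromBlocks S 0 0 0 : Matrix (m ⊕ n) (m ⊕ n) 𝕜).PosSemidef := by
  have hcongr : fromBlocks S 0 0 0 =
      fromRows 1 (0 : Matrix n m 𝕜) * S * (fromRows 1 (0 : Matrix n m 𝕜))ᴴ := by
    rw [conjTranspose_fromRows_eq_fromCols_conjTranspose, fromRows_mul, fromRows_mul_fromCols]
    simp
  rw [hcongr]
  exact hS.mul_mul_conjTranspose_same _

theorem PosSemidef.fromBlocks_mul_mul_conjTranspose [DecidableEq n] {P : Matrix n n 𝕜}
    (hP : P.PosSemidef) (A : Matrix m n 𝕜) : (fromBlocks (A * P * Aᴴ) (A * P) (A * P)ᴴ P).PosSemidef := by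
  have hcongr : fromBlocks (A * P * Aᴴ) (A * P) (A * P)ᴴ P =
      fromRows A 1 * P * (fromRows A 1)ᴴ := by
    rw [conjTranspose_fromRows_eq_fromCols_conjTranspose, fromRows_mul, fromRows_mul_fromCols]
    simp [conjTranspose_mul, hP.isHermitian.eq, Matrix.mul_assoc]
  rw [hcongr]
  exact hP.mul_mul_conjTranspose_same _

theorem PosSemidef.sub_conjTranspose_mul_inv_add_mul [StarOrderedRing 𝕜] [DecidableEq m]
    [DecidableEq n] {S : Matrix m m 𝕜} {P : Matrix n n 𝕜} (hS : S.PosDef) (hP : P.PosSemidef) (A : Matrix m n 𝕜) :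
    (P - (A * P)ᴴ * (S + A * P * Aᴴ)⁻¹ * (A * P)).PosSemidef := by
  have hM : (S + A * P * Aᴴ).PosDef := hS.add_posSemidef (hP.mul_mul_conjTranspose_same A)
  have : Invertible (S + A * P * Aᴴ) := hM.isUnit.invertible
  refine (PosDef.fromBlocks₁₁ (A * P) P hM).mp ?_
  simpa only [fromBlocks_add, add_zero, zero_add] using
    hS.posSemidef.fromBlocks_zero.add (hP.fromBlocks_mul_mul_conjTranspose A)

end Matrix

/-- The updated error covariance `(I − T H) P` is positive semidefinite Hermitian
and never exceeds `P` in the Loewner order. -/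
theorem oslp_error_covariance_update_psd (K N : ℕ)
    (P : Matrix (Fin K) (Fin K) ℂ) (hP : P.PosSemidef)
    (H : Matrix (Fin N) (Fin K) ℂ)
    (S : Matrix (Fin N) (Fin N) ℂ) (hS : S.PosDef)
    (T : Matrix (Fin K) (Fin N) ℂ)
    (hT : T = P * Hᴴ * (S + H * P * Hᴴ)⁻¹) :
    ((1 - T * H) * P).PosSemidef ∧ (P - (1 - T * H) * P).PosSemidef := by
  have hM : (S + H * P * Hᴴ).PosDef := hS.add_posSemidef (hP.mul_mul_conjTranspose_same H)
  have hgain : T * H * P = (H * P)ᴴ * (S + H * P * Hᴴ)⁻¹ * (H * P) := by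
    rw [hT, conjTranspose_mul, hP.isHermitian.eq]
    simp only [Matrix.mul_assoc]
  rw [sub_mul, one_mul, sub_sub_cancel, hgain]
  exact ⟨hP.sub_conjTranspose_mul_inv_add_mul hS H,
    hM.inv.posSemidef.conjTranspose_mul_mul_same _⟩
end

section
/- Let Q be positive definite Hermitian and suppose for matrices H₁,…,H_L (H_l ∈ ℂ^{N×K}) and positive definite Σ₁,…,Σ_L, the recursion P₀ = Q, T_l = P_{l−1} H_lᴴ (Σ_l + H_l P_{l−1} H_lᴴ)⁻¹, P_l = (I − T_l H_l) P_{l−1} is run. Then P_L = (Q⁻¹ + Σ_{l=1}^{L} H_lᴴ Σ_l⁻¹ H_l)⁻¹, and in particular P_L is invariant under any permutation of the order in which the pairs (H_l, Σ_l) are processed. -/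
open Matrix ComplexOrder

lemma oslp_step {K N : ℕ} {P : Matrix (Fin K) (Fin K) ℂ} (hP : P.PosDef)
    (H : Matrix (Fin N) (Fin K) ℂ) {S : Matrix (Fin N) (Fin N) ℂ} (hS : S.PosDef) :
    (1 - (P * Hᴴ * (S + H * P * Hᴴ)⁻¹) * H) * P = (P⁻¹ + Hᴴ * S⁻¹ * H)⁻¹ := by
  set W := S + H * P * Hᴴ with hWdef
  have hW : W.PosDef := hS.add_posSemidef (hP.posSemidef.mul_mul_conjTranspose_same H)
  have hPd : IsUnit P.det := (Matrix.isUnit_iff_isUnit_det _).mp hP.isUnit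
  have hSd : IsUnit S.det := (Matrix.isUnit_iff_isUnit_det _).mp hS.isUnit
  have hWd : IsUnit W.det := (Matrix.isUnit_iff_isUnit_det _).mp hW.isUnit
  have hkey : W⁻¹ * H + W⁻¹ * (H * P * (Hᴴ * (S⁻¹ * H))) = S⁻¹ * H := by
    have h1 : W * (S⁻¹ * H) = H + H * P * (Hᴴ * (S⁻¹ * H)) := by
      rw [hWdef, Matrix.add_mul,
        ← Matrix.mul_assoc S S⁻¹ H, Matrix.mul_nonsing_inv _ hSd, Matrix.one_mul]
      simp [Matrix.mul_assoc]
    calc W⁻¹ * H + W⁻¹ * (H * P * (Hᴴ * (S⁻¹ * H)))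
        = W⁻¹ * (H + H * P * (Hᴴ * (S⁻¹ * H))) := by rw [Matrix.mul_add]
      _ = W⁻¹ * (W * (S⁻¹ * H)) := by rw [h1]
      _ = S⁻¹ * H := by
          rw [← Matrix.mul_assoc, Matrix.nonsing_inv_mul _ hWd, Matrix.one_mul]
  symm
  apply Matrix.inv_eq_left_inv
  have hPP : P * P⁻¹ = 1 := Matrix.mul_nonsing_inv _ hPd
  calc (1 - (P * Hᴴ * W⁻¹) * H) * P * (P⁻¹ + Hᴴ * S⁻¹ * H)
      = P * P⁻¹ + P * (Hᴴ * (S⁻¹ * H)) - P * Hᴴ * (W⁻¹ * H) * (P * P⁻¹)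
        - P * Hᴴ * (W⁻¹ * (H * P * (Hᴴ * (S⁻¹ * H)))) := by
        simp only [Matrix.sub_mul, Matrix.add_mul, Matrix.mul_add, Matrix.one_mul,
          Matrix.mul_assoc]
        abel
    _ = 1 + P * Hᴴ * (S⁻¹ * H)
        - P * Hᴴ * (W⁻¹ * H + W⁻¹ * (H * P * (Hᴴ * (S⁻¹ * H)))) := by
        rw [hPP, Matrix.mul_one]
        simp only [Matrix.mul_add, Matrix.mul_assoc]
        abel
    _ = 1 := by rw [hkey]; abel

lemma oslp_aux (K N L : ℕ)
    (Q : Matrix (Fin K) (Fin K) ℂ) (hQ : Q.PosDef)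
    (H : Fin L → Matrix (Fin N) (Fin K) ℂ)
    (S : Fin L → Matrix (Fin N) (Fin N) ℂ) (hS : ∀ l, (S l).PosDef)
    (P : ℕ → Matrix (Fin K) (Fin K) ℂ)
    (hP0 : P 0 = Q)
    (hrec : ∀ l : Fin L,
      P (l + 1) = (1 - (P l * (H l)ᴴ * (S l + H l * P l * (H l)ᴴ)⁻¹) * H l) * P l) :
    P L = (Q⁻¹ + ∑ l, (H l)ᴴ * (S l)⁻¹ * H l)⁻¹ := by
  set A : ℕ → Matrix (Fin K) (Fin K) ℂ := fun n =>
    Q⁻¹ + ∑ l ∈ Finset.univ.filter (fun l : Fin L => (l : ℕ) < n),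
      (H l)ᴴ * (S l)⁻¹ * H l with hAdef
  have hA : ∀ n, (A n).PosDef := by
    intro n
    refine hQ.inv.add_posSemidef ?_
    refine Finset.sum_induction _ _ (fun a b ha hb => ha.add hb) ?_ ?_
    · exact Matrix.PosSemidef.zero
    · exact fun l _ => ((hS l).inv.posSemidef.conjTranspose_mul_mul_same (H l))
  have key : ∀ n, n ≤ L → P n = (A n)⁻¹ := by
    intro n
    induction n with
    | zero =>
      intro _
      have : A 0 = Q⁻¹ := by
        simp [hAdef]
      rw [hP0, this, Matrix.nonsing_inv_nonsing_inv _
        ((Matrix.isUnit_iff_isUnit_det _).mp hQ.isUnit)]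
    | succ n ih =>
      intro hn
      have hnL : n < L := hn
      have ihn := ih (le_of_lt hnL)
      have hPn : (P n).PosDef := by rw [ihn]; exact (hA n).inv
      have := hrec ⟨n, hnL⟩
      simp only [Fin.val_mk] at this  -- clean
      rw [this, oslp_step hPn (H ⟨n, hnL⟩) (hS ⟨n, hnL⟩), ihn,
        Matrix.nonsing_inv_nonsing_inv _ ((Matrix.isUnit_iff_isUnit_det _).mp (hA n).isUnit)]
      congr 1
      have hins : Finset.univ.filter (fun l : Fin L => (l : ℕ) < n + 1)
          = insert ⟨n, hnL⟩ (Finset.univ.filter (fun l : Fin L => (l : ℕ) < n)) := by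
        ext l
        simp [Fin.ext_iff]
        omega
      rw [hAdef]
      simp only []
      rw [hins, Finset.sum_insert (by simp)]
      abel
  have hfin : A L = Q⁻¹ + ∑ l, (H l)ᴴ * (S l)⁻¹ * H l := by
    rw [hAdef]
    simp only []
    congr 1
    apply Finset.sum_congr _ (fun _ _ => rfl)
    ext l
    simp [l.isLt]
  rw [key L le_rfl, hfin]

/-- The OSLP error covariance recursion yields the information-form MMSE covariance,
which is invariant under permutation of the APs. -/
theorem oslp_final_error_covariance (K N L : ℕ)
    (Q : Matrix (Fin K) (Fin K) ℂ) (hQ : Q.PosDef)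
    (H : Fin L → Matrix (Fin N) (Fin K) ℂ)
    (S : Fin L → Matrix (Fin N) (Fin N) ℂ) (hS : ∀ l, (S l).PosDef)
    (P : ℕ → Matrix (Fin K) (Fin K) ℂ)
    (hP0 : P 0 = Q)
    (hrec : ∀ l : Fin L,
      P (l + 1) = (1 - (P l * (H l)ᴴ * (S l + H l * P l * (H l)ᴴ)⁻¹) * H l) * P l) :
    P L = (Q⁻¹ + ∑ l, (H l)ᴴ * (S l)⁻¹ * H l)⁻¹ ∧
      ∀ (σ : Equiv.Perm (Fin L)) (P' : ℕ → Matrix (Fin K) (Fin K) ℂ),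
        P' 0 = Q →
        (∀ l : Fin L, P' (l + 1) =
          (1 - (P' l * (H (σ l))ᴴ * (S (σ l) + H (σ l) * P' l * (H (σ l))ᴴ)⁻¹) *
            H (σ l)) * P' l) →
        P' L = P L := by
  have hmain := oslp_aux K N L Q hQ H S hS P hP0 hrec
  refine ⟨hmain, ?_⟩
  intro σ P' h0 hr
  have h' := oslp_aux K N L Q hQ (fun l => H (σ l)) (fun l => S (σ l))
    (fun l => hS (σ l)) P' h0 hr
  rw [h', hmain]
  congr 1
  congr 1
  exact Equiv.sum_comp σ (fun l => (H l)ᴴ * (S l)⁻¹ * H l)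
end

section
/- Let Q, K₁, K₂ be positive definite Hermitian matrices and G₁, G₂ matrices such that G = [G₁; G₂] and K = diag(K₁, K₂). Writing V₂^c = Q Gᴴ (K + G Q Gᴴ)⁻¹ = [F₁, F₂] in blocks conformal with (M₁, M₂), the second block satisfies F₂ = P₁ G₂ᴴ (Σ₂ + G₂ P₁ G₂ᴴ)⁻¹ where P₁ = Q − Q G₁ᴴ (K₁ + G₁ Q G₁ᴴ)⁻¹ G₁ Q and Σ₂ = K₂. -/
/-!
Write `K + G Q Gᴴ` as a 2 × 2 block matrix `[A B; C D]` with `A = K₁ + G₁ Q G₁ᴴ`. Positive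
definiteness makes `A` and the whole matrix invertible, hence also the Schur complement
`D - C A⁻¹ B`, which is exactly `K₂ + G₂ P₁ G₂ᴴ`. The block-inverse formula then gives the second
block column of `Q Gᴴ (K + G Q Gᴴ)⁻¹` as `(Q G₂ᴴ - Q G₁ᴴ A⁻¹ G₁ Q G₂ᴴ) (D - C A⁻¹ B)⁻¹`,
and the first factor is `P₁ G₂ᴴ`.
-/

open Matrix ComplexOrder

namespace Matrix

variable {l m n : Type*} [Fintype m]

theorem PosDef.fromBlocks_zero_zero [Fintype n] [DecidableEq m] [DecidableEq n] {𝕜 : Type*}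
    [RCLike 𝕜] {A : Matrix m m 𝕜} {D : Matrix n n 𝕜} (hA : A.PosDef) (hD : D.PosDef) :
    (fromBlocks A 0 0 D).PosDef := by
  let := hA.isUnit.invertible
  have hpsd : (fromBlocks A 0 0ᴴ D).PosSemidef :=
    (PosDef.fromBlocks₁₁ 0 D hA).mpr (by simpa using hD.posSemidef)
  rw [conjTranspose_zero] at hpsd
  exact hpsd.posDef_iff_isUnit.mpr (isUnit_fromBlocks_zero₂₁.mpr ⟨hA.isUnit, hD.isUnit⟩)

theorem fromRows_mul_mul_conjTranspose_fromRows {α : Type*} [CommRing α] [StarRing α]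
    (G₁ : Matrix l m α) (G₂ : Matrix n m α) (Q : Matrix m m α) :
    fromRows G₁ G₂ * Q * (fromRows G₁ G₂)ᴴ =
      fromBlocks (G₁ * Q * G₁ᴴ) (G₁ * Q * G₂ᴴ) (G₂ * Q * G₁ᴴ) (G₂ * Q * G₂ᴴ) := by
  rw [conjTranspose_fromRows_eq_fromCols_conjTranspose, fromRows_mul, fromRows_mul_fromCols]

theorem toCols₂_mul_inv_fromBlocks [Fintype n] [DecidableEq m] [DecidableEq n] {α : Type*}
    [CommRing α] (X : Matrix l m α) (Y : Matrix l n α) {A : Matrix m m α} (B : Matrix m n α)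
    (C : Matrix n m α) (D : Matrix n n α) (hA : IsUnit A) (hM : IsUnit (fromBlocks A B C D)) :
    (fromCols X Y * (fromBlocks A B C D)⁻¹).toCols₂ =
      (Y - X * A⁻¹ * B) * (D - C * A⁻¹ * B)⁻¹ := by
  let := hA.invertible
  let := hM.invertible
  let := invertibleOfFromBlocks₁₁Invertible A B C D
  rw [← invOf_eq_nonsing_inv (fromBlocks A B C D), invOf_fromBlocks₁₁_eq, fromCols_mul_fromBlocks,
    toCols₂_fromCols, ← invOf_eq_nonsing_inv, ← invOf_eq_nonsing_inv]
  simp only [Matrix.mul_neg, Matrix.sub_mul, Matrix.mul_assoc]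
  abel

end Matrix

/-- The block of the centralized LMMSE receiver acting on the new AP's data equals
the local Kalman-type gain `T₂` computed from the prior error covariance `P₁`. -/
theorem centralized_lmmse_second_block (K M₁ M₂ : ℕ)
    (Q : Matrix (Fin K) (Fin K) ℂ) (hQ : Q.PosDef)
    (G₁ : Matrix (Fin M₁) (Fin K) ℂ) (G₂ : Matrix (Fin M₂) (Fin K) ℂ)
    (K₁ : Matrix (Fin M₁) (Fin M₁) ℂ) (K₂ : Matrix (Fin M₂) (Fin M₂) ℂ)
    (hK₁ : K₁.PosDef) (hK₂ : K₂.PosDef)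
    (P₁ : Matrix (Fin K) (Fin K) ℂ)
    (hP₁ : P₁ = Q - Q * G₁ᴴ * (K₁ + G₁ * Q * G₁ᴴ)⁻¹ * G₁ * Q) :
    ∀ (k : Fin K) (j : Fin M₂),
      (Q * (fromRows G₁ G₂)ᴴ *
        (fromBlocks K₁ 0 0 K₂ + fromRows G₁ G₂ * Q * (fromRows G₁ G₂)ᴴ)⁻¹)
          k (Sum.inr j) =
      (P₁ * G₂ᴴ * (K₂ + G₂ * P₁ * G₂ᴴ)⁻¹) k j := by
  intro k j
  have hM : (fromBlocks K₁ 0 0 K₂ + fromRows G₁ G₂ * Q * (fromRows G₁ G₂)ᴴ).PosDef :=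
    (hK₁.fromBlocks_zero_zero hK₂).add_posSemidef (hQ.posSemidef.mul_mul_conjTranspose_same _)
  have hA : (K₁ + G₁ * Q * G₁ᴴ).PosDef :=
    hK₁.add_posSemidef (hQ.posSemidef.mul_mul_conjTranspose_same G₁)
  rw [fromRows_mul_mul_conjTranspose_fromRows, fromBlocks_add, zero_add, zero_add] at hM ⊢
  rw [conjTranspose_fromRows_eq_fromCols_conjTranspose, mul_fromCols]
  refine congr_fun₂ ((toCols₂_mul_inv_fromBlocks _ _ _ _ _ hA.isUnit hM.isUnit).trans ?_) k j
  subst hP₁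
  congr 2 <;> simp only [Matrix.mul_sub, Matrix.sub_mul, Matrix.mul_assoc, add_sub_assoc]
end
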